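/- Abstract Céa-type lemma for penalized Petrov–Galerkin methods: let V_h be a finite-dimensional space with norm ||·||_h, let E : V_h → [0,∞) satisfy the quasi-triangle inequality E(v_h) ≤ C₀(E(w_h) + ||w_h - v_h||_h) for all v_h, w_h ∈ V_h, and let a_h be a bilinear form on V_h satisfying the coercivity a_h(w,w) ≥ α ||w||_h² and the consistency bound |a_h(u_h - v_h, u_h - v_h)| ≤ C₁ E(v_h) ||u_h - v_h||_h for the discrete solution u_h and all v_h ∈ V_h. Then E(u_h) ≤ C₀(1 + C₁/α) inf_{v_h ∈ V_h} E(v_h). -/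
import Mathlib


/-- abstract Céa-type lemma for penalized Petrov–Galerkin methods. -/
theorem stmt_6 {V : Type*} [NormedAddCommGroup V] [NormedSpace ℝ V] [FiniteDimensional ℝ V]
    (a : V →ₗ[ℝ] V →ₗ[ℝ] ℝ) (E : V → ℝ) (hE : ∀ v, 0 ≤ E v)
    (C₀ C₁ α : ℝ) (hC₀ : 0 < C₀) (hC₁ : 0 < C₁) (hα : 0 < α)
    (u_h : V)
    (htri : ∀ v w : V, E v ≤ C₀ * (E w + ‖w - v‖))
    (hcoer : ∀ w : V, α * ‖w‖ ^ 2 ≤ a w w)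
    (hcons : ∀ v : V, |a (u_h - v) (u_h - v)| ≤ C₁ * E v * ‖u_h - v‖) :
    E u_h ≤ C₀ * (1 + C₁ / α) * ⨅ v : V, E v := by
  have key : ∀ v : V, E u_h ≤ C₀ * (1 + C₁ / α) * E v := by
    intro v
    have hnorm : ‖u_h - v‖ ≤ (C₁ / α) * E v := by
      rcases eq_or_lt_of_le (norm_nonneg (u_h - v)) with h0 | h0
      · rw [← h0]
        exact mul_nonneg (by positivity) (hE v)
      · have h1 : α * ‖u_h - v‖ ^ 2 ≤ C₁ * E v * ‖u_h - v‖ :=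
          (hcoer (u_h - v)).trans ((le_abs_self _).trans (hcons v))
        have h2 : α * ‖u_h - v‖ ≤ C₁ * E v := by
          nlinarith [h1]
        rw [div_mul_eq_mul_div, le_div_iff₀ hα]
        linarith
    calc E u_h ≤ C₀ * (E v + ‖v - u_h‖) := htri u_h v
      _ = C₀ * (E v + ‖u_h - v‖) := by rw [norm_sub_rev]
      _ ≤ C₀ * (E v + (C₁ / α) * E v) := by
          apply mul_le_mul_of_nonneg_left (by linarith) hC₀.le
      _ = C₀ * (1 + C₁ / α) * E v := by ring
  have hcpos : 0 < C₀ * (1 + C₁ / α) := by positivity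
  have hdiv : E u_h / (C₀ * (1 + C₁ / α)) ≤ ⨅ v : V, E v := by
    apply le_ciInf
    intro v
    rw [div_le_iff₀ hcpos]
    calc E u_h ≤ C₀ * (1 + C₁ / α) * E v := key v
      _ = E v * (C₀ * (1 + C₁ / α)) := by ring
  calc E u_h = (E u_h / (C₀ * (1 + C₁ / α))) * (C₀ * (1 + C₁ / α)) := by
        field_simp
    _ ≤ (⨅ v : V, E v) * (C₀ * (1 + C₁ / α)) := by
        apply mul_le_mul_of_nonneg_right hdiv hcpos.le
    _ = C₀ * (1 + C₁ / α) * ⨅ v : V, E v := by ring
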